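/- arXiv:1509.07947 — 2 statements merged into one kernel-verified Lean document; each statement's English description precedes it below -/
import Mathlib

section
/- Suppose x̂ ∈ ℝⁿ and u ∈ ℝⁿ satisfy: (i) (1/m)A_Ŝᵀ(y − A_Ŝ x̂_Ŝ) = h W_Ŝ u_Ŝ where Ŝ = supp(x̂) and u_Ŝ = sign(x̂_Ŝ); (ii) |(1/m)A_iᵀ(y − A_Ŝ x̂_Ŝ)| < h w_i for all i ∉ Ŝ; and (iii) A_Ŝ has full column rank. Then x̂ is the unique global minimizer of f(x) = (1/(2m))‖Ax − y‖₂² + h‖Wx‖₁. -/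
open Matrix Finset

lemma sign_mul_self_eq_abs (a : ℝ) (ha : a ≠ 0) : Real.sign a * a = |a| := by
  rcases ha.lt_or_gt with h|h
  · rw [Real.sign_of_neg h, abs_of_neg h]; ring
  · rw [Real.sign_of_pos h, abs_of_pos h]; ring

lemma sign_mul_le_abs (a b : ℝ) : Real.sign a * b ≤ |b| := by
  rcases lt_trichotomy a 0 with h|h|h
  · rw [Real.sign_of_neg h]; simpa using neg_le_abs b
  · simp [h, abs_nonneg]
  · rw [Real.sign_of_pos h]; simpa using le_abs_self b

/-- If x̂ satisfies the stationarity equation on its support Ŝ with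
`u_Ŝ = sign(x̂_Ŝ)`, strict dual feasibility off the support, and the columns of A
on Ŝ are linearly independent (A_Ŝ full column rank), then x̂ is the unique
global minimizer of `f(x) = (1/(2m))‖Ax − y‖₂² + h‖Wx‖₁`. -/
theorem sufficient_conditions_unique_min
    (m n : ℕ) (hm : 0 < m)
    (A : Matrix (Fin m) (Fin n) ℝ) (y : Fin m → ℝ)
    (h : ℝ) (hh : 0 < h) (w : Fin n → ℝ) (hw : ∀ i, 0 < w i)
    (f : (Fin n → ℝ) → ℝ)
    (hf : ∀ x, f x = (1 / (2 * (m : ℝ))) * ∑ r, ((A *ᵥ x - y) r) ^ 2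
        + h * ∑ i, |w i * x i|)
    (xhat : Fin n → ℝ)
    -- (i) stationarity on the support Ŝ with u_Ŝ = sign(x̂_Ŝ)
    (hstat : ∀ i, xhat i ≠ 0 →
      (1 / (m : ℝ)) * (Aᵀ *ᵥ (y - A *ᵥ xhat)) i = h * (w i * Real.sign (xhat i)))
    -- (ii) strict dual feasibility off the support
    (hdual : ∀ i, xhat i = 0 →
      |(1 / (m : ℝ)) * (Aᵀ *ᵥ (y - A *ᵥ xhat)) i| < h * w i)
    -- (iii) A_Ŝ has full column rank
    (hrank : LinearIndependent ℝ (fun i : {i : Fin n // xhat i ≠ 0} => Aᵀ i.1)) :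
    ∀ x : Fin n → ℝ, x ≠ xhat → f xhat < f x := by
  intro x hx
  have hm' : (0:ℝ) < m := by exact_mod_cast hm
  set d : Fin n → ℝ := fun i => x i - xhat i with hd
  set g : Fin n → ℝ := fun i => (1 / (m : ℝ)) * ((Aᵀ *ᵥ (y - A *ᵥ xhat)) i) with hg
  -- key identity
  have hAx : A *ᵥ x = (A *ᵥ xhat) + (A *ᵥ d) := by
    have hxd : x = xhat + d := by funext i; simp [hd]
    rw [hxd, Matrix.mulVec_add]
  have hdot : (A *ᵥ xhat - y) ⬝ᵥ (A *ᵥ d) = (Aᵀ *ᵥ (A *ᵥ xhat - y)) ⬝ᵥ d := by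
    rw [Matrix.dotProduct_mulVec, Matrix.mulVec_transpose]
  have hdot2 : (Aᵀ *ᵥ (A *ᵥ xhat - y)) ⬝ᵥ d = -∑ i, (Aᵀ *ᵥ (y - A *ᵥ xhat)) i * d i := by
    have : A *ᵥ xhat - y = -(y - A *ᵥ xhat) := by ring_nf
    rw [this, Matrix.mulVec_neg]
    simp [dotProduct, Finset.sum_neg_distrib]
  have expand : ∑ r, ((A *ᵥ x - y) r)^2
      = ∑ r, ((A *ᵥ xhat - y) r)^2 + ∑ r, ((A *ᵥ d) r)^2
        + 2 * ((A *ᵥ xhat - y) ⬝ᵥ (A *ᵥ d)) := by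
    simp only [dotProduct, Finset.mul_sum, ← Finset.sum_add_distrib]
    apply Finset.sum_congr rfl
    intro r _
    have : (A *ᵥ x - y) r = (A *ᵥ xhat - y) r + (A *ᵥ d) r := by
      rw [hAx]; simp [Pi.add_apply]; ring
    rw [this]; ring
  have key : f x - f xhat = (1 / (2 * (m:ℝ))) * ∑ r, ((A *ᵥ d) r)^2
      + ∑ i, (h * |w i * x i| - h * |w i * xhat i| - g i * d i) := by
    rw [hf x, hf xhat, expand, hdot, hdot2]
    have hsum : ∑ i, (h * |w i * x i| - h * |w i * xhat i| - g i * d i)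
        = h * ∑ i, |w i * x i| - h * ∑ i, |w i * xhat i|
          - (1 / (m:ℝ)) * ∑ i, (Aᵀ *ᵥ (y - A *ᵥ xhat)) i * d i := by
      simp only [Finset.mul_sum, ← Finset.sum_sub_distrib, hg]
      apply Finset.sum_congr rfl; intro i _; ring
    rw [hsum]
    field_simp
    ring
  -- per-term nonnegativity
  have hterm : ∀ i, 0 ≤ h * |w i * x i| - h * |w i * xhat i| - g i * d i := by
    intro i
    have hwi := hw i
    by_cases h0 : xhat i = 0
    · have hdi : d i = x i := by simp [hd, h0]
      have habs : |w i * x i| = w i * |x i| := by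
        rw [abs_mul, abs_of_pos hwi]
      have hgb : |g i| < h * w i := hdual i h0
      have h1 : g i * d i ≤ |g i| * |x i| := by
        rw [hdi]
        calc g i * x i ≤ |g i * x i| := le_abs_self _
          _ = |g i| * |x i| := abs_mul _ _
      have h2 : |g i| * |x i| ≤ h * w i * |x i| :=
        mul_le_mul_of_nonneg_right hgb.le (abs_nonneg _)
      rw [h0, habs]
      simp only [mul_zero, abs_zero]
      nlinarith [abs_nonneg (x i)]
    · have hgi : g i = h * (w i * Real.sign (xhat i)) := hstat i h0
      have h1 : Real.sign (xhat i) * d i ≤ |x i| - |xhat i| := by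
        have := sign_mul_le_abs (xhat i) (x i)
        have h2 := sign_mul_self_eq_abs (xhat i) h0
        simp only [hd]
        nlinarith
      have habs1 : |w i * x i| = w i * |x i| := by rw [abs_mul, abs_of_pos hwi]
      have habs2 : |w i * xhat i| = w i * |xhat i| := by rw [abs_mul, abs_of_pos hwi]
      rw [hgi, habs1, habs2]
      nlinarith [mul_le_mul_of_nonneg_left h1 (by positivity : (0:ℝ) ≤ h * w i)]
  have hquad0 : 0 ≤ ∑ r, ((A *ᵥ d) r)^2 :=
    Finset.sum_nonneg (fun r _ => sq_nonneg _)
  have hsum0 : 0 ≤ ∑ i, (h * |w i * x i| - h * |w i * xhat i| - g i * d i) :=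
    Finset.sum_nonneg (fun i _ => hterm i)
  -- strictness
  by_cases hc : ∀ i, xhat i = 0 → x i = 0
  · -- d supported on the support of xhat; use linear independence
    have hdne : d ≠ 0 := by
      intro h0
      apply hx
      funext i
      have := congrFun h0 i
      simp [hd] at this
      linarith
    have hAd : A *ᵥ d ≠ 0 := by
      intro h0
      apply hdne
      have hsum : ∑ i : {i : Fin n // xhat i ≠ 0}, d i.1 • Aᵀ i.1 = 0 := by
        have e1 : ∑ i : {i : Fin n // xhat i ≠ 0}, d i.1 • Aᵀ i.1
            = ∑ i ∈ Finset.univ.filter (fun i => xhat i ≠ 0), d i • Aᵀ i := by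
          exact (Finset.sum_subtype (p := fun i => xhat i ≠ 0)
            (Finset.univ.filter (fun i => xhat i ≠ 0)) (by simp)
            (fun i => d i • Aᵀ i)).symm
        have e2 : ∑ i ∈ Finset.univ.filter (fun i => xhat i ≠ 0), d i • Aᵀ i
            = ∑ i, d i • Aᵀ i := by
          apply Finset.sum_subset (Finset.subset_univ _)
          intro i _ hi
          simp only [Finset.mem_filter, Finset.mem_univ, true_and, not_not] at hi
          have : d i = 0 := by simp [hd, hi, hc i hi]
          simp [this]
        have e3 : ∑ i, d i • Aᵀ i = A *ᵥ d := by
          funext r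
          simp [Matrix.mulVec, dotProduct, Finset.sum_apply, Matrix.transpose_apply,
            mul_comm]
        rw [e1, e2, e3, h0]
      have hzero := Fintype.linearIndependent_iff.mp hrank (fun i => d i.1) hsum
      funext i
      by_cases hi : xhat i = 0
      · simp [hd, hi, hc i hi]
      · exact hzero ⟨i, hi⟩
    obtain ⟨r, hr⟩ := Function.ne_iff.mp hAd
    have hquad : 0 < ∑ r, ((A *ᵥ d) r)^2 := by
      apply Finset.sum_pos' (fun r _ => sq_nonneg _)
      refine ⟨r, Finset.mem_univ r, ?_⟩
      have := pow_pos (abs_pos.mpr hr) 2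
      rwa [sq_abs] at this
    have : 0 < f x - f xhat := by
      rw [key]
      have : 0 < (1 / (2 * (m:ℝ))) * ∑ r, ((A *ᵥ d) r)^2 := by positivity
      linarith
    linarith
  · push_neg at hc
    obtain ⟨i, h0, hxi⟩ := hc
    have hdi : d i = x i := by simp [hd, h0]
    have hsumpos : 0 < ∑ i, (h * |w i * x i| - h * |w i * xhat i| - g i * d i) := by
      apply Finset.sum_pos' (fun j _ => hterm j)
      refine ⟨i, Finset.mem_univ i, ?_⟩
      have hgb : |g i| < h * w i := hdual i h0
      have habs : |w i * x i| = w i * |x i| := by rw [abs_mul, abs_of_pos (hw i)]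
      have h1 : g i * d i ≤ |g i| * |x i| := by
        rw [hdi]
        calc g i * x i ≤ |g i * x i| := le_abs_self _
          _ = |g i| * |x i| := abs_mul _ _
      have hxipos : 0 < |x i| := abs_pos.mpr hxi
      rw [h0, habs]
      simp only [mul_zero, abs_zero]
      nlinarith
    have : 0 < f x - f xhat := by
      rw [key]
      have : 0 ≤ (1 / (2 * (m:ℝ))) * ∑ r, ((A *ᵥ d) r)^2 := by positivity
      linarith
    linarith
end

section
/- Suppose the events (1) |(1/m)A_iᵀ[(I − A_S A_S⁺)Z + mh A_S(A_SᵀA_S)^{−1}W_S u_S]| < h w_i for all i ∈ S^c, and (2) sign(x_S* + A_S⁺Z − mh(A_SᵀA_S)^{−1}W_S u_S) = sign(x_S*) hold, where u_S = sign(x_S*) and A_S has full column rank. Then the vector x⁺ defined by x⁺_S = x_S* + A_S⁺Z − mh(A_SᵀA_S)^{−1}W_S u_S and x⁺_{S^c} = 0 is the unique minimizer of f(x) = (1/(2m))‖Ax − y‖₂² + h‖Wx‖₁ with y = Ax* + Z, and sign(x⁺) = sign(x*). -/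
open Matrix Finset

private lemma sign_mul_self' (x : ℝ) : Real.sign x * x = |x| := by
  rcases lt_trichotomy x 0 with h|h|h
  · rw [Real.sign_of_neg h, abs_of_neg h]; ring
  · simp [h]
  · rw [Real.sign_of_pos h, abs_of_pos h]; ring

private lemma abs_sign_le_one' (x : ℝ) : |Real.sign x| ≤ 1 := by
  rcases lt_trichotomy x 0 with h|h|h
  · simp [Real.sign_of_neg h]
  · simp [h]
  · simp [Real.sign_of_pos h]

/-- Lemma 2 of the paper: if (1) strict dual feasibility holds off the support
and (2) the sign condition holds on the support, then the vector `x⁺` built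
from `x_S⁺ = x_S* + A_S⁺Z − mh(A_SᵀA_S)⁻¹W_S u_S` on the support `S` (and zero
off `S`) is the unique minimizer of
`f(x) = (1/(2m))‖Ax − y‖₂² + h‖Wx‖₁` with `y = Ax* + Z`, and `sign x⁺ = sign x*`. -/
theorem support_recovery_sufficient
    (m n k : ℕ) (hm : 0 < m)
    (A : Matrix (Fin m) (Fin n) ℝ) (Z : Fin m → ℝ)
    (h : ℝ) (hh : 0 < h) (w : Fin n → ℝ) (hw : ∀ i, 0 < w i)
    -- the support S, enumerated by an injection ι : Fin k ↪ Fin n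
    (ι : Fin k ↪ Fin n)
    (xstar : Fin n → ℝ)
    (hsupp₁ : ∀ j : Fin k, xstar (ι j) ≠ 0)
    (hsupp₂ : ∀ i : Fin n, (∀ j : Fin k, ι j ≠ i) → xstar i = 0)
    -- the column submatrix A_S, sign vector u_S, restricted quantities
    (AS : Matrix (Fin m) (Fin k) ℝ) (hAS : ∀ r j, AS r j = A r (ι j))
    (WS : Matrix (Fin k) (Fin k) ℝ)
    (hWS : WS = Matrix.diagonal fun j => w (ι j))
    (uS : Fin k → ℝ) (huS : uS = fun j => Real.sign (xstar (ι j)))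
    -- A_S has full column rank
    (hrank : IsUnit (ASᵀ * AS).det)
    -- the candidate solution on the support and its extension to ℝⁿ
    (xplusS : Fin k → ℝ)
    (hxplusS : xplusS = (fun j => xstar (ι j)) + ((ASᵀ * AS)⁻¹ * ASᵀ) *ᵥ Z
        - ((m : ℝ) * h) • (((ASᵀ * AS)⁻¹ * WS) *ᵥ uS))
    (xplus : Fin n → ℝ)
    (hxplus : ∀ i, xplus i = ∑ j, if ι j = i then xplusS j else 0)
    -- the measurements and the objective
    (y : Fin m → ℝ) (hy : y = A *ᵥ xstar + Z)
    (f : (Fin n → ℝ) → ℝ)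
    (hf : ∀ x, f x = (1 / (2 * (m : ℝ))) * ∑ r, ((A *ᵥ x - y) r) ^ 2
        + h * ∑ i, |w i * x i|)
    -- event (1): strict dual feasibility off the support
    (hev1 : ∀ i : Fin n, (∀ j : Fin k, ι j ≠ i) →
      |(1 / (m : ℝ)) * ∑ r, A r i *
          (((1 - AS * ((ASᵀ * AS)⁻¹ * ASᵀ)) *ᵥ Z) r
            + (((m : ℝ) * h) • ((AS * (ASᵀ * AS)⁻¹ * WS) *ᵥ uS)) r)|
        < h * w i)
    -- event (2): sign consistency on the support
    (hev2 : ∀ j : Fin k, Real.sign (xplusS j) = Real.sign (xstar (ι j))) :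
    (∀ x : Fin n → ℝ, x ≠ xplus → f xplus < f x) ∧
      (∀ i, Real.sign (xplus i) = Real.sign (xstar i)) := by
  have hm' : (0:ℝ) < (m:ℝ) := by exact_mod_cast hm
  have hmne : (m:ℝ) ≠ 0 := ne_of_gt hm'
  -- basic pointwise facts about the support embedding
  have hsum_pt : ∀ (vS : Fin k → ℝ) (j0 : Fin k),
      (∑ j, if ι j = ι j0 then vS j else 0) = vS j0 := by
    intro vS j0
    rw [Finset.sum_eq_single j0]
    · simp
    · intro j _ hj
      exact if_neg fun hij => hj (ι.injective hij)
    · simp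
  have hxplus_on : ∀ j, xplus (ι j) = xplusS j := fun j => by
    rw [hxplus]; exact hsum_pt _ j
  have hxplus_off : ∀ i, (∀ j, ι j ≠ i) → xplus i = 0 := by
    intro i hi
    rw [hxplus]
    exact Finset.sum_eq_zero fun j _ => if_neg (hi j)
  -- multiplication of `A` against vectors supported on `S`
  have hmv : ∀ (v : Fin n → ℝ) (vS : Fin k → ℝ),
      (∀ i, v i = ∑ j, if ι j = i then vS j else 0) → A *ᵥ v = AS *ᵥ vS := by
    intro v vS hv
    funext r
    simp only [Matrix.mulVec, dotProduct]
    calc ∑ i, A r i * v i = ∑ i, ∑ j, (if ι j = i then A r i * vS j else 0) := by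
          refine Finset.sum_congr rfl fun i _ => ?_
          rw [hv i, Finset.mul_sum]
          exact Finset.sum_congr rfl fun j _ => by split <;> simp
      _ = ∑ j, ∑ i, (if ι j = i then A r i * vS j else 0) := Finset.sum_comm
      _ = ∑ j, AS r j * vS j := by
          refine Finset.sum_congr rfl fun j _ => ?_
          rw [Finset.sum_ite_eq]
          simp [hAS]
  have hxstar_rep : ∀ i, xstar i = ∑ j, if ι j = i then xstar (ι j) else 0 := by
    intro i
    by_cases hi : ∃ j, ι j = i
    · obtain ⟨j0, rfl⟩ := hi
      exact (hsum_pt (fun j => xstar (ι j)) j0).symm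
    · push_neg at hi
      rw [hsupp₂ i hi]
      exact (Finset.sum_eq_zero fun j _ => if_neg (hi j)).symm
  have hAxstar : A *ᵥ xstar = AS *ᵥ (fun j => xstar (ι j)) := hmv _ _ hxstar_rep
  have hAxplus : A *ᵥ xplus = AS *ᵥ xplusS := hmv _ _ hxplus
  -- the residual and its explicit form
  set rvec : Fin m → ℝ := y - A *ᵥ xplus with hrvec_def
  have hrvec_eq : rvec = ((1 - AS * ((ASᵀ * AS)⁻¹ * ASᵀ)) *ᵥ Z)
      + ((m : ℝ) * h) • ((AS * (ASᵀ * AS)⁻¹ * WS) *ᵥ uS) := by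
    rw [hrvec_def, hy, hAxstar, hAxplus, hxplusS]
    simp only [Matrix.mulVec_add, Matrix.mulVec_sub, Matrix.mulVec_smul,
      Matrix.mulVec_mulVec, Matrix.sub_mulVec, Matrix.one_mulVec, Matrix.mul_assoc]
    abel
  have hinv : (ASᵀ * AS) * (ASᵀ * AS)⁻¹ = 1 := Matrix.mul_nonsing_inv _ hrank
  have hASr : ASᵀ *ᵥ rvec = ((m : ℝ) * h) • (WS *ᵥ uS) := by
    rw [hrvec_eq, Matrix.mulVec_add, Matrix.mulVec_smul, Matrix.mulVec_mulVec,
      Matrix.mulVec_mulVec]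
    have h1 : ASᵀ * (1 - AS * ((ASᵀ * AS)⁻¹ * ASᵀ)) = 0 := by
      rw [Matrix.mul_sub, Matrix.mul_one, ← Matrix.mul_assoc, ← Matrix.mul_assoc,
        hinv, Matrix.one_mul, sub_self]
    have h2 : ASᵀ * (AS * (ASᵀ * AS)⁻¹ * WS) = WS := by
      rw [← Matrix.mul_assoc, ← Matrix.mul_assoc, hinv, Matrix.one_mul]
    rw [h1, h2, Matrix.zero_mulVec, zero_add]
  have hWSuS : WS *ᵥ uS = fun j => w (ι j) * uS j := by
    funext j
    rw [hWS, Matrix.mulVec_diagonal]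
  -- the "gradient" on the support
  have hgS : ∀ j, (∑ r', A r' (ι j) * rvec r') = (m : ℝ) * h * (w (ι j) * uS j) := by
    intro j
    have h0 := congrFun hASr j
    rw [hWSuS] at h0
    simp only [Pi.smul_apply, smul_eq_mul] at h0
    rw [← h0]
    simp only [Matrix.mulVec, dotProduct, Matrix.transpose_apply]
    exact Finset.sum_congr rfl fun r' _ => by rw [hAS]
  -- the "gradient" off the support
  have hgoff : ∀ i, (∀ j, ι j ≠ i) →
      |(1/(m:ℝ)) * ∑ r', A r' i * rvec r'| < h * w i := by
    intro i hi
    have hexp : (∑ r', A r' i * rvec r')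
        = ∑ r', A r' i * ((((1 - AS * ((ASᵀ * AS)⁻¹ * ASᵀ)) *ᵥ Z) r')
            + (((m : ℝ) * h) • ((AS * (ASᵀ * AS)⁻¹ * WS) *ᵥ uS)) r') := by
      refine Finset.sum_congr rfl fun r' _ => ?_
      rw [hrvec_eq]
      rfl
    rw [hexp]
    exact hev1 i hi
  have habs : ∀ v : Fin n → ℝ, (∑ i, |w i * v i|) = ∑ i, w i * |v i| :=
    fun v => Finset.sum_congr rfl fun i _ => by rw [abs_mul, abs_of_pos (hw i)]
  constructor
  · -- uniqueness of the minimizer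
    intro x hx
    set d : Fin n → ℝ := x - xplus with hd
    have hdapp : ∀ i, d i = x i - xplus i := fun i => rfl
    -- quadratic expansion
    have hsq : ∀ r', ((A *ᵥ x - y) r')^2
        = ((A *ᵥ xplus - y) r')^2 - 2 * (rvec r' * (A *ᵥ d) r') + ((A *ᵥ d) r')^2 := by
      intro r'
      have hAd : (A *ᵥ d) r' = (A *ᵥ x) r' - (A *ᵥ xplus) r' := by
        rw [hd, Matrix.mulVec_sub]; rfl
      have hr' : rvec r' = y r' - (A *ᵥ xplus) r' := rfl
      simp only [Pi.sub_apply, hAd, hr']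
      ring
    have hswap : ∑ r', rvec r' * (A *ᵥ d) r'
        = ∑ i, (∑ r', A r' i * rvec r') * d i := by
      simp only [Matrix.mulVec, dotProduct, Finset.mul_sum, Finset.sum_mul]
      rw [Finset.sum_comm]
      exact Finset.sum_congr rfl fun i _ => Finset.sum_congr rfl fun r' _ => by ring
    have h1 : ∑ r', ((A *ᵥ x - y) r')^2
        = ∑ r', ((A *ᵥ xplus - y) r')^2
          - 2 * ∑ i, (∑ r', A r' i * rvec r') * d i
          + ∑ r', ((A *ᵥ d) r')^2 := by
      rw [← hswap]
      simp only [hsq]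
      rw [Finset.sum_add_distrib, Finset.sum_sub_distrib, ← Finset.mul_sum]
    -- the per-coordinate terms
    set T : Fin n → ℝ := fun i =>
      -((1/(m:ℝ)) * (∑ r', A r' i * rvec r')) * d i
        + h * (w i * |x i| - w i * |xplus i|) with hT
    have hTs : ∑ i, T i
        = -((1/(m:ℝ)) * ∑ i, (∑ r', A r' i * rvec r') * d i)
          + h * ((∑ i, w i * |x i|) - ∑ i, w i * |xplus i|) := by
      calc ∑ i, T i
          = ∑ i, ((-(1/(m:ℝ))) * ((∑ r', A r' i * rvec r') * d i)
              + h * (w i * |x i|) - h * (w i * |xplus i|)) :=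
            Finset.sum_congr rfl fun i _ => by simp only [hT]; ring
        _ = _ := by
            rw [Finset.sum_sub_distrib, Finset.sum_add_distrib,
              ← Finset.mul_sum, ← Finset.mul_sum, ← Finset.mul_sum]
            ring
    have hfx : f x = f xplus + (1/(2*(m:ℝ))) * (∑ r', ((A *ᵥ d) r')^2) + ∑ i, T i := by
      rw [hf x, hf xplus, habs x, habs xplus, h1, hTs]
      field_simp
      ring
    -- each per-coordinate term is nonnegative
    have hterm : ∀ i, 0 ≤ T i := by
      intro i
      by_cases hi : ∃ j, ι j = i
      · obtain ⟨j, rfl⟩ := hi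
        simp only [hT]
        rw [hgS j, hxplus_on j, hdapp, hxplus_on j]
        have hc : (1/(m:ℝ)) * ((m:ℝ) * h * (w (ι j) * uS j)) = h * (w (ι j) * uS j) := by
          field_simp
        rw [hc]
        have hsx : uS j * xplusS j = |xplusS j| := by
          have : uS j = Real.sign (xplusS j) := by rw [huS, hev2 j]
          rw [this]
          exact sign_mul_self' _
        have hle : uS j * x (ι j) ≤ |x (ι j)| := by
          calc uS j * x (ι j) ≤ |uS j * x (ι j)| := le_abs_self _
            _ = |uS j| * |x (ι j)| := abs_mul _ _
            _ ≤ 1 * |x (ι j)| := by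
                refine mul_le_mul_of_nonneg_right ?_ (abs_nonneg _)
                rw [huS]; exact abs_sign_le_one' _
            _ = |x (ι j)| := one_mul _
        have key : 0 ≤ (h * w (ι j)) * (|x (ι j)| - uS j * x (ι j)) :=
          mul_nonneg (mul_pos hh (hw (ι j))).le (sub_nonneg.mpr hle)
        have hsx' : h * w (ι j) * (uS j * xplusS j) = h * w (ι j) * |xplusS j| := by
          rw [hsx]
        nlinarith [key, hsx']
      · push_neg at hi
        simp only [hT]
        rw [hxplus_off _ hi, hdapp, hxplus_off _ hi]
        have hb := hgoff i hi
        set c : ℝ := (1/(m:ℝ)) * ∑ r', A r' i * rvec r' with hcdef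
        have h1' : c * x i ≤ |c| * |x i| := by
          calc c * x i ≤ |c * x i| := le_abs_self _
            _ = |c| * |x i| := abs_mul _ _
        have h2' : |c| * |x i| ≤ h * w i * |x i| :=
          mul_le_mul_of_nonneg_right hb.le (abs_nonneg _)
        simp only [abs_zero, mul_zero, sub_zero]
        nlinarith [h1', h2']
    -- strict positivity off the support
    have hterm_strict : ∀ i, (∀ j, ι j ≠ i) → x i ≠ 0 → 0 < T i := by
      intro i hi hxne
      simp only [hT]
      rw [hxplus_off _ hi, hdapp, hxplus_off _ hi]
      have hb := hgoff i hi
      set c : ℝ := (1/(m:ℝ)) * ∑ r', A r' i * rvec r' with hcdef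
      have h1' : c * x i ≤ |c| * |x i| := by
        calc c * x i ≤ |c * x i| := le_abs_self _
          _ = |c| * |x i| := abs_mul _ _
      have h2' : |c| * |x i| < h * w i * |x i| :=
        mul_lt_mul_of_pos_right hb (abs_pos.mpr hxne)
      simp only [abs_zero, mul_zero, sub_zero]
      nlinarith [h1', h2']
    have hQnn : 0 ≤ ∑ r', ((A *ᵥ d) r')^2 := Finset.sum_nonneg fun _ _ => sq_nonneg _
    have hc2 : 0 < 1/(2*(m:ℝ)) := by positivity
    by_cases hcase : ∃ i, (∀ j, ι j ≠ i) ∧ x i ≠ 0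
    · obtain ⟨i0, hi0, hxne⟩ := hcase
      have hpos : 0 < ∑ i, T i :=
        Finset.sum_pos' (fun i _ => hterm i)
          ⟨i0, Finset.mem_univ _, hterm_strict i0 hi0 hxne⟩
      nlinarith [mul_nonneg hc2.le hQnn]
    · push_neg at hcase
      have hxrep : ∀ i, x i = ∑ j, if ι j = i then x (ι j) else 0 := by
        intro i
        by_cases hi : ∃ j, ι j = i
        · obtain ⟨j0, rfl⟩ := hi
          exact (hsum_pt (fun j => x (ι j)) j0).symm
        · push_neg at hi
          rw [hcase i hi]
          exact (Finset.sum_eq_zero fun j _ => if_neg (hi j)).symm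
      have hAx' : A *ᵥ x = AS *ᵥ (fun j => x (ι j)) := hmv _ _ hxrep
      have hAdne : A *ᵥ d ≠ 0 := by
        intro h0
        apply hx
        have hAeq : AS *ᵥ (fun j => x (ι j)) = AS *ᵥ xplusS := by
          rw [← hAx', ← hAxplus]
          have : A *ᵥ d = A *ᵥ x - A *ᵥ xplus := by rw [hd, Matrix.mulVec_sub]
          rw [this] at h0
          linear_combination (norm := abel) h0
        have hker : (fun j => x (ι j)) = xplusS := by
          have h1' : (ASᵀ * AS) *ᵥ ((fun j => x (ι j)) - xplusS) = 0 := by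
            rw [← Matrix.mulVec_mulVec, Matrix.mulVec_sub, hAeq, sub_self,
              Matrix.mulVec_zero]
          have h2' : ((ASᵀ*AS)⁻¹ * (ASᵀ*AS)) *ᵥ ((fun j => x (ι j)) - xplusS) = 0 := by
            rw [← Matrix.mulVec_mulVec, h1', Matrix.mulVec_zero]
          rw [Matrix.nonsing_inv_mul _ hrank, Matrix.one_mulVec] at h2'
          exact sub_eq_zero.mp h2'
        funext i
        by_cases hi : ∃ j, ι j = i
        · obtain ⟨j0, rfl⟩ := hi
          rw [hxplus_on j0, ← congrFun hker j0]
        · push_neg at hi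
          rw [hxplus_off i hi, hcase i hi]
      obtain ⟨r0, hr0⟩ : ∃ r0, (A *ᵥ d) r0 ≠ 0 := by
        by_contra hcon
        push_neg at hcon
        exact hAdne (funext hcon)
      have hQ : 0 < ∑ r', ((A *ᵥ d) r')^2 :=
        Finset.sum_pos' (fun _ _ => sq_nonneg _)
          ⟨r0, Finset.mem_univ _,
            lt_of_le_of_ne (sq_nonneg _) (Ne.symm (pow_ne_zero 2 hr0))⟩
      have hTsum : 0 ≤ ∑ i, T i := Finset.sum_nonneg fun i _ => hterm i
      nlinarith [mul_pos hc2 hQ]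
  · -- sign consistency
    intro i
    by_cases hi : ∃ j, ι j = i
    · obtain ⟨j, rfl⟩ := hi
      rw [hxplus_on j]
      exact hev2 j
    · push_neg at hi
      rw [hxplus_off i hi, hsupp₂ i hi]
end
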